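/- arXiv:1711.00689 — 3 statements merged into one kernel-verified Lean document; each statement's English description precedes it below -/
import Mathlib

section
/- Let K be a field of characteristic different from 2, and let A be a commutative non-associative K-algebra (x*y = y*x) satisfying the Jacobi identity x*(y*z) + z*(x*y) + y*(z*x) = 0. Then for all b, b', x, y ∈ A, the identity ((b*x)*b')*y + ((b'*x)*b)*y + ((b*y)*b')*x + ((b'*y)*b)*x + (b*x)*(b'*y) + (b'*x)*(b*y) = 0 holds. -/
theorem stmt2 (K : Type*) [Field K] (h2 : (2 : K) ≠ 0)
    (A : Type*) [AddCommGroup A] [Module K A]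
    (m : A →ₗ[K] A →ₗ[K] A)
    (hcomm : ∀ x y : A, m x y = m y x)
    (hjac : ∀ x y z : A, m x (m y z) + m z (m x y) + m y (m z x) = 0) :
    ∀ b b' x y : A,
      m (m (m b x) b') y + m (m (m b' x) b) y + m (m (m b y) b') x +
        m (m (m b' y) b) x + m (m b x) (m b' y) + m (m b' x) (m b y) = 0 := by
  intro b b' x y
  have hexp : ∀ u v w : A, m (m u v) w = -(m u (m v w)) - m v (m u w) := by
    intro u v w
    have h := hjac u v w
    rw [hcomm w (m u v), hcomm w u] at h
    have hsum : (m u (m v w) + m v (m u w)) + m (m u v) w = 0 := by rw [← h]; abel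
    exact (neg_eq_of_add_eq_zero_right hsum).symm.trans (by abel)
  have inner : ∀ a p q r : A,
      m a (m p (m q r)) + m a (m r (m p q)) + m a (m q (m r p)) = 0 := by
    intro a p q r
    have h := congrArg (m a) (hjac p q r)
    simpa only [map_add, map_zero] using h
  have HB := inner b b' x y
  have HC := inner b' b x y
  have HX := inner x b b' y
  have HY := inner y b b' x
  have HBC := hjac (m b b') x y
  have HBX := hjac (m b x) b' y
  have HBY := hjac (m b y) b' x
  set LB := m b (m b' (m x y)) + m b (m y (m b' x)) + m b (m x (m y b')) with hLB
  set LC := m b' (m b (m x y)) + m b' (m y (m b x)) + m b' (m x (m y b)) with hLC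
  set LX := m x (m b (m b' y)) + m x (m y (m b b')) + m x (m b' (m y b)) with hLX
  set LY := m y (m b (m b' x)) + m y (m x (m b b')) + m y (m b' (m x b)) with hLY
  set LBC := m (m b b') (m x y) + m y (m (m b b') x) + m x (m y (m b b')) with hLBC
  set LBX := m (m b x) (m b' y) + m y (m (m b x) b') + m b' (m y (m b x)) with hLBX
  set LBY := m (m b y) (m b' x) + m x (m (m b y) b') + m b' (m x (m b y)) with hLBY
  have key : (2 : ℤ) • (m (m (m b x) b') y + m (m (m b' x) b) y + m (m (m b y) b') x +
        m (m (m b' y) b) x + m (m b x) (m b' y) + m (m b' x) (m b y))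
      = (-5 : ℤ) • LB + (-5 : ℤ) • LC + (-8 : ℤ) • LX + LY + (7 : ℤ) • LBC + LBX - LBY := by
    rw [hLB, hLC, hLX, hLY, hLBC, hLBX, hLBY]
    simp only [hexp, map_add, map_neg, map_sub, LinearMap.add_apply, LinearMap.neg_apply,
      LinearMap.sub_apply, hcomm b' b, hcomm x b, hcomm y b, hcomm x b', hcomm y b', hcomm y x]
    abel
  rw [HB, HC, HX, HY, HBC, HBX, HBY] at key
  simp only [smul_zero, add_zero, zero_add, sub_zero] at key
  have key2 : (2 : K) • (m (m (m b x) b') y + m (m (m b' x) b) y + m (m (m b y) b') x +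
        m (m (m b' y) b) x + m (m b x) (m b' y) + m (m b' x) (m b y)) = 0 := by
    rw [two_smul]
    rw [two_smul] at key
    exact key
  rcases smul_eq_zero.mp key2 with h | h
  · exact absurd h h2
  · exact h
end

section
/- Let K be a field of characteristic different from 2 and A a commutative mock–Lie K-algebra (commutative and satisfying the Jacobi identity). Then for all b, b', x, y ∈ A, (b*b')*(x*y) = ((b*x)*b')*y + ((b'*x)*b)*y + ((b*y)*b')*x + ((b'*y)*b)*x. -/
theorem stmt3 (K : Type*) [Field K] (h2 : (2 : K) ≠ 0)
    (A : Type*) [AddCommGroup A] [Module K A]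
    (m : A →ₗ[K] A →ₗ[K] A)
    (hcomm : ∀ x y : A, m x y = m y x)
    (hjac : ∀ x y z : A, m x (m y z) + m z (m x y) + m y (m z x) = 0) :
    ∀ b b' x y : A,
      m (m b b') (m x y) =
        m (m (m b x) b') y + m (m (m b' x) b) y + m (m (m b y) b') x +
          m (m (m b' y) b) x := by
  intro b b' x y
  have key : ∀ u v w : A, m u (m v w) = 0 - m w (m u v) - m v (m w u) := by
    intro u v w
    rw [← hjac u v w]; abel
  have e1 : m (m b b') (m x y) = 0 - m y (m (m b b') x) - m x (m y (m b b')) :=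
    key _ _ _
  have e2 : m (m b b') x = 0 - m b' (m x b) - m b (m b' x) := by
    rw [hcomm (m b b') x]; exact key x b b'
  have e3 : m y (m b b') = 0 - m b' (m y b) - m b (m b' y) := key y b b'
  rw [e1, e2, e3]
  simp only [map_sub, map_zero]
  rw [hcomm (m (m b x) b') y, hcomm (m b x) b', hcomm b x,
      hcomm (m (m b' x) b) y, hcomm (m b' x) b,
      hcomm (m (m b y) b') x, hcomm (m b y) b', hcomm b y,
      hcomm (m (m b' y) b) x, hcomm (m b' y) b]
  abel
end

section
/- Let K be a field and A a commutative non-associative K-algebra satisfying the identity z*(x*y) = λ·((z*x)*y) + λ·((z*y)*x) for a fixed λ ∈ K. Then for all b, x, y ∈ A, (λ² - 1)·((b*x)*y) + (λ² + λ)·((b*y)*x) = 0. -/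
theorem stmt5 (K : Type*) [Field K] (A : Type*) [AddCommGroup A] [Module K A]
    (m : A →ₗ[K] A →ₗ[K] A) (lam : K)
    (hcomm : ∀ x y : A, m x y = m y x)
    (hid : ∀ z x y : A, m z (m x y) = lam • (m (m z x) y) + lam • (m (m z y) x)) :
    ∀ b x y : A,
      (lam ^ 2 - 1) • (m (m b x) y) + (lam ^ 2 + lam) • (m (m b y) x) = 0 := by
  intro b x y
  have h1 : m (m b x) y = lam • (m (m b y) x) + lam • (m b (m x y)) := by
    rw [hcomm (m b x) y, hid y b x, hcomm y b, hcomm (m y x) b, hcomm y x]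
  have h2 := hid b x y
  linear_combination (norm := module) (-1 : K) • h1 - lam • h2
end
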